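/- Let A be an arena with recharge weight function w, cap ∈ ℕ, and t ∈ ℕ. If Player 0 wins the average-bounded recharge game (A, AvgRecharge(w, cap, t)), then she has a winning strategy for this game that is finite-state of size cap + 2, i.e., implemented by a memory structure with cap + 2 states. -/

import Mathlib

/-!
Memory states `some 0, …, some cap` record the current recharge energy level and `none` records
that it has dropped below `0`. In the product of the arena with this memory, weighting each vertex
by the recorded level (and by `t + 1` once the energy is exhausted) turns the average-bounded
recharge objective into a mean-payoff objective with threshold `t`, and winning strategies transfer
between the two games.

Mean-payoff games with vertex weights are positionally determined for Player 0. Consider the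
first-cycle game for the weights `f - t`, which ends when a loop is closed. If Player 0 wins it,
following a winning move for the current stack of the simple path keeps all prefix sums of `f - t`
bounded. The least bound that Player 0 can guarantee from a vertex is then a potential: she can
always move to a successor whose potential is lower by at least the current weight, and this
positional choice keeps the prefix sums bounded as well. If Player 1 wins it, he can make every closed loop weigh at least `1`, which pushes the
average of `f` above `t + 1 / card S` against any strategy of Player 0.

A positional strategy in the product arena is a strategy with `cap + 2` memory states.
-/

/-- An arena: a directed graph without terminal vertices, a set `V0` of Player 0's
vertices (Player 1 controls the complement), and an initial vertex. -/
structure Arena (V : Type) where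
  V0 : Set V
  E : V → V → Prop
  vI : V
  succ : ∀ v, ∃ v', E v v'

/-- A play: an infinite path starting in the initial vertex. -/
def Arena.Play {V : Type} (A : Arena V) (ρ : ℕ → V) : Prop :=
  ρ 0 = A.vI ∧ ∀ n, A.E (ρ n) (ρ (n + 1))

/-- The play prefix `ρ 0 ⋯ ρ n` as a list. -/
def prefixList {V : Type} (ρ : ℕ → V) (n : ℕ) : List V :=
  (List.range (n + 1)).map ρ

/-- A strategy for the player controlling the vertices in `p`. -/
def Arena.IsStrategy {V : Type} (A : Arena V) (p : Set V) (σ : List V → V) : Prop :=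
  ∀ (h : List V) (v : V), v ∈ p → A.E v (σ (h ++ [v]))

/-- Consistency of a play with a strategy of the player controlling `p`. -/
def Arena.ConsistentWith {V : Type} (A : Arena V) (p : Set V) (σ : List V → V) (ρ : ℕ → V) : Prop :=
  ∀ n, ρ n ∈ p → ρ (n + 1) = σ (prefixList ρ n)

/-- `σ` is a winning strategy for the player controlling `p` with objective `Obj`. -/
def Arena.WinningStrategy {V : Type} (A : Arena V) (p : Set V) (Obj : Set (ℕ → V))
    (σ : List V → V) : Prop :=
  A.IsStrategy p σ ∧ ∀ ρ, A.Play ρ → A.ConsistentWith p σ ρ → ρ ∈ Obj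

/-- Player 0 wins the game `(A, Win)`. -/
def Arena.Player0Wins {V : Type} (A : Arena V) (Win : Set (ℕ → V)) : Prop :=
  ∃ σ, A.WinningStrategy A.V0 Win σ

/-- `h` is a finite play prefix consistent with the strategy `σ` of the player controlling `p`. -/
def Arena.FinPrefix {V : Type} (A : Arena V) (p : Set V) (σ : List V → V) (h : List V) : Prop :=
  ∃ ρ n, A.Play ρ ∧ A.ConsistentWith p σ ρ ∧ h = prefixList ρ n

/-- A positional strategy only depends on the last vertex. -/
def Positional {X : Type} (σ : List X → X) : Prop :=
  ∀ (h : List X) (v : X), σ (h ++ [v]) = σ [v]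

/-- The energy level of the play prefix `ρ 0 ⋯ ρ n` is `EL w ρ n`:
the sum of the weights of its `n` edges. -/
def EL {V : Type} (w : V → V → ℤ) (ρ : ℕ → V) (n : ℕ) : ℤ :=
  ∑ i ∈ Finset.range n, w (ρ i) (ρ (i + 1))

/-- The energy level of a finite play prefix given as a list. -/
def ELl {V : Type} (w : V → V → ℤ) : List V → ℤ
  | [] => 0
  | [_] => 0
  | a :: b :: l => w a b + ELl w (b :: l)

/-- The average accumulated energy of the first `n` prefixes. -/
noncomputable def avgEL {V : Type} (w : V → V → ℤ) (ρ : ℕ → V) (n : ℕ) : ℝ :=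
  (∑ i ∈ Finset.range n, (EL w ρ i : ℝ)) / (n : ℝ)

/-- The lower-bounded energy objective. -/
def EnergyL {V : Type} (w : V → V → ℤ) : Set (ℕ → V) :=
  {ρ | ∀ n, 0 ≤ EL w ρ n}

/-- The lower- and upper-bounded energy objective. -/
def EnergyLU {V : Type} (w : V → V → ℤ) (cap : ℕ) : Set (ℕ → V) :=
  {ρ | ∀ n, 0 ≤ EL w ρ n ∧ EL w ρ n ≤ (cap : ℤ)}

/-- The average-energy objective: limsup of the averages is at most `t`. -/
def AvgE {V : Type} (w : V → V → ℤ) (t : ℝ) : Set (ℕ → V) :=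
  {ρ | Filter.limsup (fun n => (avgEL w ρ n : EReal)) Filter.atTop ≤ (t : EReal)}

/-- The lower-bounded average-energy objective. -/
def AvgEnergyL {V : Type} (w : V → V → ℤ) (t : ℝ) : Set (ℕ → V) :=
  EnergyL w ∩ AvgE w t

/-- The mean-payoff objective. -/
def MP {V : Type} (w : V → V → ℤ) (t : ℝ) : Set (ℕ → V) :=
  {ρ | Filter.limsup (fun n => (((EL w ρ n : ℝ) / (n : ℝ)) : EReal)) Filter.atTop ≤ (t : EReal)}

/-- A memory structure: initial memory state and update along edges. -/
structure Mem (V M : Type) where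
  mI : M
  upd : M → V → V → M

/-- Tracking the memory state along a play. -/
def Mem.track {V M : Type} (mem : Mem V M) (ρ : ℕ → V) : ℕ → M
  | 0 => mem.mI
  | n + 1 => mem.upd (Mem.track mem ρ n) (ρ n) (ρ (n + 1))

def Mem.runAux {V M : Type} (mem : Mem V M) : M → List V → M
  | m, [] => m
  | m, [_] => m
  | m, a :: b :: l => Mem.runAux mem (mem.upd m a b) (b :: l)

/-- `Upd⁺`: the memory state reached along a finite play prefix. -/
def Mem.run {V M : Type} (mem : Mem V M) (h : List V) : M :=
  Mem.runAux mem mem.mI h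

/-- The strategy `σ` is implemented by the memory structure `mem`
(via some next-move function). -/
def Arena.ImplementedBy {V M : Type} (A : Arena V) (mem : Mem V M) (σ : List V → V) : Prop :=
  ∃ nxt : V → M → V, ∀ (h : List V) (v : V), σ (h ++ [v]) = nxt v (mem.run (h ++ [v]))

/-- `σ` is a finite-state strategy of size `k`. -/
def Arena.FiniteStateOfSize {V : Type} (A : Arena V) (k : ℕ) (σ : List V → V) : Prop :=
  ∃ (M : Type) (inst : Fintype M) (mem : Mem V M),
    @Fintype.card M inst = k ∧ A.ImplementedBy mem σ

/-- The expanded arena `A × M`. -/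
def Arena.expand {V M : Type} (A : Arena V) (mem : Mem V M) : Arena (V × M) where
  V0 := {p | p.1 ∈ A.V0}
  E := fun p q => A.E p.1 q.1 ∧ q.2 = mem.upd p.2 p.1 q.1
  vI := (A.vI, mem.mI)
  succ := fun p => by
    obtain ⟨v', h⟩ := A.succ p.1
    exact ⟨(v', mem.upd p.2 p.1 v'), h, rfl⟩

/-- The extended play in `A × M` corresponding to a play in `A`. -/
def extendPlay {V M : Type} (mem : Mem V M) (ρ : ℕ → V) : ℕ → V × M :=
  fun n => (ρ n, Mem.track mem ρ n)

/-- `(A, Win) ≤_M (A × M, Win')`. -/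
def Reduces {V M : Type} (A : Arena V) (mem : Mem V M) (Win : Set (ℕ → V))
    (Win' : Set (ℕ → V × M)) : Prop :=
  ∀ ρ, A.Play ρ → (ρ ∈ Win ↔ extendPlay mem ρ ∈ Win')

/-- A recharge weight function (`none` is the recharge label `R`) assigns
non-positive weights to all (non-recharge) edges. -/
def RechargeWeights {V : Type} (A : Arena V) (w : V → V → Option ℤ) : Prop :=
  ∀ u v, A.E u v → ∀ k : ℤ, w u v = some k → k ≤ 0

/-- The recharge energy level of the prefix `ρ 0 ⋯ ρ n`: the capacity plus the
accumulated weight since the last `R`-edge. -/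
def ELcap {V : Type} (w : V → V → Option ℤ) (cap : ℕ) (ρ : ℕ → V) : ℕ → ℤ
  | 0 => (cap : ℤ)
  | n + 1 =>
    match w (ρ n) (ρ (n + 1)) with
    | none => (cap : ℤ)
    | some k => ELcap w cap ρ n + k

/-- The recharge objective. -/
def Recharge {V : Type} (w : V → V → Option ℤ) (cap : ℕ) : Set (ℕ → V) :=
  {ρ | ∀ n, 0 ≤ ELcap w cap ρ n}

/-- The average of the recharge energy levels of the first `n` prefixes. -/
noncomputable def avgELcap {V : Type} (w : V → V → Option ℤ) (cap : ℕ) (ρ : ℕ → V)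
    (n : ℕ) : ℝ :=
  (∑ i ∈ Finset.range n, (ELcap w cap ρ i : ℝ)) / (n : ℝ)

/-- The average-bounded recharge objective. -/
def AvgRecharge {V : Type} (w : V → V → Option ℤ) (cap : ℕ) (t : ℝ) : Set (ℕ → V) :=
  {ρ | Filter.limsup (fun n => (avgELcap w cap ρ n : EReal)) Filter.atTop ≤ (t : EReal)} ∩
    Recharge w cap

/-- The (max-)parity objective: the maximal color occurring infinitely often is even. -/
def ParityObj {V : Type} (Ω : V → ℕ) : Set (ℕ → V) :=
  {ρ | ∃ c, Even c ∧ {n | Ω (ρ n) = c}.Infinite ∧ ∀ d, {n | Ω (ρ n) = d}.Infinite → d ≤ c}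

open Filter Finset

section Sequences

variable {V : Type}

lemma prefixList_succ (ρ : ℕ → V) (n : ℕ) :
    prefixList ρ (n + 1) = prefixList ρ n ++ [ρ (n + 1)] := by
  simp [prefixList, List.range_succ]

lemma prefixList_succ_eq_cons (ρ : ℕ → V) (n : ℕ) :
    prefixList ρ (n + 1) = ρ 0 :: prefixList (fun k => ρ (k + 1)) n := by
  unfold prefixList
  conv_lhs => rw [List.range_succ_eq_map]
  simp only [List.map_cons, List.map_map]
  rfl

lemma exists_prefixList_eq_append (ρ : ℕ → V) (n : ℕ) :
    ∃ h, prefixList ρ n = h ++ [ρ n] := by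
  cases n with
  | zero => exact ⟨[], rfl⟩
  | succ n => exact ⟨_, prefixList_succ ρ n⟩

lemma getLastD_prefixList (ρ : ℕ → V) (n : ℕ) (d : V) :
    (prefixList ρ n).getLastD d = ρ n := by
  obtain ⟨h, hh⟩ := exists_prefixList_eq_append ρ n
  rw [hh, List.getLastD_concat]

lemma map_prefixList {W : Type} (f : V → W) (ρ : ℕ → V) (n : ℕ) :
    (prefixList ρ n).map f = prefixList (f ∘ ρ) n := by
  simp [prefixList]

lemma exists_seq_succ_eq_prefixList (F : List V → V) (s : V) :
    ∃ ρ : ℕ → V, ρ 0 = s ∧ ∀ n, ρ (n + 1) = F (prefixList ρ n) := by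
  let hist : ℕ → List V := fun n => Nat.rec [s] (fun _ h => h ++ [F h]) n
  have prefixList_eq_hist : ∀ n, prefixList (fun k => (hist k).getLastD s) n = hist n := by
    intro n
    induction n with
    | zero => rfl
    | succ n ih =>
      rw [prefixList_succ, ih]
      exact congrArg (hist n ++ [·]) List.getLastD_concat
  refine ⟨fun k => (hist k).getLastD s, rfl, fun n => ?_⟩
  rw [prefixList_eq_hist]
  exact List.getLastD_concat

end Sequences

namespace Arena

variable {V : Type} (A : Arena V)

def withInit (s : V) : Arena V := { A with vI := s }

noncomputable def defaultSucc (v : V) : V := (A.succ v).choose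

lemma edge_defaultSucc (v : V) : A.E v (A.defaultSucc v) := (A.succ v).choose_spec

noncomputable def defaultStrategy (h : List V) : V := A.defaultSucc (h.getLastD A.vI)

lemma isStrategy_defaultStrategy (p : Set V) : A.IsStrategy p A.defaultStrategy := by
  intro h v _
  rw [defaultStrategy, List.getLastD_concat]
  exact A.edge_defaultSucc v

variable {A}

lemma IsStrategy.edge_prefixList {p : Set V} {σ : List V → V} (hσ : A.IsStrategy p σ)
    (ρ : ℕ → V) (n : ℕ) (hn : ρ n ∈ p) : A.E (ρ n) (σ (prefixList ρ n)) := by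
  obtain ⟨h, hh⟩ := exists_prefixList_eq_append ρ n
  rw [hh]
  exact hσ h (ρ n) hn

lemma exists_play_consistentWith {σ τ : List V → V} (hσ : A.IsStrategy A.V0 σ)
    (hτ : A.IsStrategy A.V0ᶜ τ) :
    ∃ ρ, A.Play ρ ∧ A.ConsistentWith A.V0 σ ρ ∧ A.ConsistentWith A.V0ᶜ τ ρ := by
  classical
  obtain ⟨ρ, hρ0, hρ⟩ := exists_seq_succ_eq_prefixList
    (fun h => if h.getLastD A.vI ∈ A.V0 then σ h else τ h) A.vI
  simp only [getLastD_prefixList] at hρ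
  refine ⟨ρ, ⟨hρ0, fun n => ?_⟩, fun n hn => by simp [hρ, hn],
    fun n (hn : ρ n ∉ A.V0) => by simp [hρ, hn]⟩
  by_cases hn : ρ n ∈ A.V0
  · simpa [hρ, hn] using hσ.edge_prefixList ρ n hn
  · simpa [hρ, hn] using hτ.edge_prefixList ρ n hn

lemma WinningStrategy.exists_play_mem {Win : Set (ℕ → V)} {σ : List V → V}
    (hσ : A.WinningStrategy A.V0 Win σ) : ∃ ρ, A.Play ρ ∧ ρ ∈ Win := by
  obtain ⟨ρ, hρ, hc, -⟩ := exists_play_consistentWith hσ.1 (A.isStrategy_defaultStrategy _)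
  exact ⟨ρ, hρ, hσ.2 ρ hρ hc⟩

end Arena

section WeightBounds

variable {S : Type} [Fintype S] (g : S → ℤ)

lemma abs_le_sum_abs (s : S) : |g s| ≤ ∑ s, |g s| :=
  single_le_sum (fun s _ => abs_nonneg (g s)) (mem_univ s)

lemma abs_sum_map_le_of_nodup [DecidableEq S] {p : List S} (hp : p.Nodup) :
    |(p.map g).sum| ≤ ∑ s, |g s| := by
  rw [← List.sum_toFinset g hp]
  exact (abs_sum_le_sum_abs g _).trans (sum_le_univ_sum_of_nonneg fun s => abs_nonneg _)

end WeightBounds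

section LoopStack

variable {S : Type} [DecidableEq S]

/-- The stack of the current simple path, most recent vertex first: moving to `s` pushes `s`, or
pops the loop closed by `s` if `s` is already on the stack. -/
def pushPop (p : List S) (s : S) : List S :=
  if s ∈ p then p.dropWhile (· ≠ s) else s :: p

def loopStack (h : List S) : List S := h.foldl pushPop []

lemma exists_dropWhile_ne_eq_cons {p : List S} {s : S} (hs : s ∈ p) :
    ∃ l, p.dropWhile (· ≠ s) = s :: l := by
  induction p with
  | nil => simp at hs
  | cons a p ih =>
    by_cases ha : a = s
    · exact ⟨p, by simp [ha]⟩
    · rw [List.dropWhile_cons, if_pos (by simpa using ha)]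
      exact ih ((List.mem_cons.1 hs).resolve_left (Ne.symm ha))

lemma exists_pushPop_eq_cons (p : List S) (s : S) : ∃ l, pushPop p s = s :: l := by
  unfold pushPop
  split_ifs with hs
  exacts [exists_dropWhile_ne_eq_cons hs, ⟨p, rfl⟩]

lemma List.Nodup.pushPop {p : List S} (hp : p.Nodup) (s : S) : (pushPop p s).Nodup := by
  unfold _root_.pushPop
  split_ifs with hs
  exacts [hp.sublist (List.dropWhile_suffix _).sublist, List.nodup_cons.2 ⟨hs, hp⟩]

lemma loopStack_append_singleton (h : List S) (s : S) :
    loopStack (h ++ [s]) = pushPop (loopStack h) s := by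
  simp [loopStack]

lemma nodup_loopStack (h : List S) : (loopStack h).Nodup := by
  induction h using List.reverseRecOn with
  | nil => exact List.nodup_nil
  | append_singleton h s ih => rw [loopStack_append_singleton]; exact ih.pushPop s

/-- The loop closed by moving to `s` consists of `s` and the stack entries above it. -/
def loopWeight (g : S → ℤ) (p : List S) (s : S) : ℤ :=
  if s ∈ p then g s + ((p.takeWhile (· ≠ s)).map g).sum else 0

lemma sum_map_pushPop_add_loopWeight (g : S → ℤ) (p : List S) (s : S) :
    ((pushPop p s).map g).sum + loopWeight g p s = (p.map g).sum + g s := by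
  unfold pushPop loopWeight
  split_ifs
  · conv_rhs => rw [← List.takeWhile_append_dropWhile (p := (· ≠ s)) (l := p)]
    rw [List.map_append, List.sum_append]
    ring
  · simp [add_comm]

variable (ρ : ℕ → S)

lemma loopStack_prefixList_succ (n : ℕ) :
    loopStack (prefixList ρ (n + 1)) = pushPop (loopStack (prefixList ρ n)) (ρ (n + 1)) := by
  rw [prefixList_succ, loopStack_append_singleton]

lemma exists_loopStack_prefixList_eq_cons (n : ℕ) :
    ∃ l, loopStack (prefixList ρ n) = ρ n :: l := by
  cases n with
  | zero => exact ⟨[], rfl⟩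
  | succ n => rw [loopStack_prefixList_succ]; exact exists_pushPop_eq_cons _ _

lemma sum_range_add_eq_sum_loopStack_add_sum_loopWeight (g : S → ℤ) (n : ℕ) :
    ∑ i ∈ range n, g (ρ i) + g (ρ n) = ((loopStack (prefixList ρ n)).map g).sum +
      ∑ i ∈ range n, loopWeight g (loopStack (prefixList ρ i)) (ρ (i + 1)) := by
  induction n with
  | zero => simp [loopStack, prefixList, pushPop]
  | succ n ih =>
    rw [sum_range_succ, sum_range_succ, loopStack_prefixList_succ]
    linarith [sum_map_pushPop_add_loopWeight g (loopStack (prefixList ρ n)) (ρ (n + 1))]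

variable [Fintype S]

lemma length_loopStack_le (h : List S) : (loopStack h).length ≤ Fintype.card S :=
  (nodup_loopStack h).length_le_card

/-- Every move pushes or pops, and a pop removes fewer than `card S` entries. -/
lemma add_one_le_length_loopStack_add_card_mul_sum {c : ℕ → ℤ} (hc : ∀ i, 0 ≤ c i)
    (hpop : ∀ i, ρ (i + 1) ∈ loopStack (prefixList ρ i) → 1 ≤ c i) (n : ℕ) :
    (n : ℤ) + 1 ≤
      (loopStack (prefixList ρ n)).length + Fintype.card S * ∑ i ∈ range n, c i := by
  induction n with
  | zero => simp [loopStack, prefixList, pushPop]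
  | succ n ih =>
    rw [loopStack_prefixList_succ, sum_range_succ, mul_add]
    have hcard : ((loopStack (prefixList ρ n)).length : ℤ) ≤ Fintype.card S := by
      exact_mod_cast length_loopStack_le _
    by_cases hmem : ρ (n + 1) ∈ loopStack (prefixList ρ n)
    · obtain ⟨l, hl⟩ := exists_pushPop_eq_cons (loopStack (prefixList ρ n)) (ρ (n + 1))
      rw [hl, List.length_cons]
      push_cast
      linarith [mul_le_mul_of_nonneg_left (hpop n hmem) (Int.natCast_nonneg (Fintype.card S))]
    · rw [pushPop, if_neg hmem, List.length_cons]
      push_cast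
      linarith [mul_nonneg (Int.natCast_nonneg (Fintype.card S)) (hc n)]

end LoopStack

section FirstCycleGame

variable {S : Type} [DecidableEq S] (B : Arena S) (g : S → ℤ)

/-- The first-cycle game from the stack `p`, with `k` moves left: players move along edges until
a loop is closed; Player 0 wins if that loop has non-positive weight. -/
def FirstCycleWinIn : ℕ → List S → Prop
  | 0, _ => False
  | _ + 1, [] => False
  | k + 1, s :: l =>
    (s ∈ B.V0 → ∃ s', B.E s s' ∧
      if s' ∈ s :: l then loopWeight g (s :: l) s' ≤ 0
      else FirstCycleWinIn k (s' :: s :: l)) ∧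
    (s ∉ B.V0 → ∀ s', B.E s s' →
      if s' ∈ s :: l then loopWeight g (s :: l) s' ≤ 0
      else FirstCycleWinIn k (s' :: s :: l))

variable [Fintype S]

/-- A loop is closed after at most `card S` further moves, so this much fuel decides the game. -/
def FirstCycleWins (p : List S) : Prop :=
  FirstCycleWinIn B g (Fintype.card S + 1 - p.length) p

def FirstCycleGood (p : List S) (s : S) : Prop :=
  if s ∈ p then loopWeight g p s ≤ 0 else FirstCycleWins B g (s :: p)

lemma firstCycleWins_cons_iff {s : S} {l : List S} (hlen : (s :: l).length ≤ Fintype.card S) :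
    FirstCycleWins B g (s :: l) ↔
      (s ∈ B.V0 → ∃ s', B.E s s' ∧ FirstCycleGood B g (s :: l) s') ∧
      (s ∉ B.V0 → ∀ s', B.E s s' → FirstCycleGood B g (s :: l) s') := by
  unfold FirstCycleWins FirstCycleGood
  rw [show Fintype.card S + 1 - (s :: l).length = Fintype.card S - (s :: l).length + 1 by omega,
    FirstCycleWinIn]
  simp only [FirstCycleWins, List.length_cons, Nat.add_sub_add_right]

variable {g}

lemma loopWeight_nonpos_of_firstCycleGood {p : List S} {s : S} (h : FirstCycleGood B g p s) :
    loopWeight g p s ≤ 0 := by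
  by_cases hs : s ∈ p
  · simpa [FirstCycleGood, hs] using h
  · simp [loopWeight, hs]

lemma loopWeight_nonneg_of_not_firstCycleGood {p : List S} {s : S}
    (h : ¬ FirstCycleGood B g p s) :
    0 ≤ loopWeight g p s ∧ (s ∈ p → 1 ≤ loopWeight g p s) := by
  by_cases hs : s ∈ p
  · have : ¬ loopWeight g p s ≤ 0 := by simpa [FirstCycleGood, hs] using h
    exact ⟨by omega, fun _ => by omega⟩
  · simp [loopWeight, hs]

end FirstCycleGame

section StackStrategy

variable {S : Type} [DecidableEq S] (B : Arena S)

def Hereditary (P : List S → Prop) (p : List S) : Prop :=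
  ∀ q, q <:+ p → q ≠ [] → P q

lemma Hereditary.pushPop {P : List S → Prop} {p : List S} (hp : Hereditary P p) {s : S}
    (hs : s ∉ p → P (s :: p)) : Hereditary P (pushPop p s) := by
  unfold _root_.pushPop
  split_ifs with hmem
  · exact fun q hq => hp q (hq.trans (List.dropWhile_suffix _))
  · intro q hq hq0
    rcases List.suffix_cons_iff.1 hq with rfl | hq
    exacts [hs hmem, hp q hq hq0]

open Classical in
noncomputable def stackStrategy (Q : List S → S → Prop) (h : List S) : S :=
  if hx : ∃ s, B.E (h.getLastD B.vI) s ∧ Q (loopStack h) s then hx.choose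
  else B.defaultSucc (h.getLastD B.vI)

lemma isStrategy_stackStrategy (p : Set S) (Q : List S → S → Prop) :
    B.IsStrategy p (stackStrategy B Q) := by
  intro h v _
  unfold stackStrategy
  split_ifs with hx
  · simpa using hx.choose_spec.1
  · simpa using B.edge_defaultSucc v

lemma stackStrategy_spec {Q : List S → S → Prop} {h : List S}
    (hx : ∃ s, B.E (h.getLastD B.vI) s ∧ Q (loopStack h) s) :
    Q (loopStack h) (stackStrategy B Q h) := by
  rw [stackStrategy, dif_pos hx]
  exact hx.choose_spec.2

variable {B}

lemma stackStrategy_forces {pl : Set S} {P : List S → Prop} {Q : List S → S → Prop}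
    (hQ : ∀ p s, Q p s → s ∉ p → P (s :: p))
    (hP : ∀ s l, (s :: l).Nodup → P (s :: l) →
      (s ∈ pl → ∃ s', B.E s s' ∧ Q (s :: l) s') ∧
      (s ∉ pl → ∀ s', B.E s s' → Q (s :: l) s'))
    (hinit : P [B.vI]) {ρ : ℕ → S} (hρ : B.Play ρ)
    (hc : B.ConsistentWith pl (stackStrategy B Q) ρ) (n : ℕ) :
    Q (loopStack (prefixList ρ n)) (ρ (n + 1)) := by
  have hmove : ∀ n, Hereditary P (loopStack (prefixList ρ n)) →
      Q (loopStack (prefixList ρ n)) (ρ (n + 1)) := by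
    intro n hH
    obtain ⟨l, hl⟩ := exists_loopStack_prefixList_eq_cons ρ n
    obtain ⟨hown, hother⟩ :=
      hP (ρ n) l (hl ▸ nodup_loopStack _) (hH _ (hl ▸ List.suffix_rfl) (by simp))
    by_cases hn : ρ n ∈ pl
    · rw [hc n hn]
      apply stackStrategy_spec
      rw [getLastD_prefixList, hl]
      exact hown hn
    · rw [hl]
      exact hother hn _ (hρ.2 n)
  have hinv : ∀ n, Hereditary P (loopStack (prefixList ρ n)) := by
    intro n
    induction n with
    | zero =>
      intro q hq hq0
      rcases List.suffix_cons_iff.1 hq with rfl | hq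
      · simpa [loopStack, prefixList, pushPop, hρ.1] using hinit
      · exact absurd (List.suffix_nil.1 hq) hq0
    | succ n ih =>
      rw [loopStack_prefixList_succ]
      exact ih.pushPop (hQ _ _ (hmove n ih))
  exact hmove n (hinv n)

end StackStrategy

section FirstCycleOutcomes

variable {S : Type} [DecidableEq S] [Fintype S] {B : Arena S} {g : S → ℤ}

lemma sum_range_le_of_firstCycleWins (hwin : FirstCycleWins B g [B.vI]) {ρ : ℕ → S}
    (hρ : B.Play ρ) (hc : B.ConsistentWith B.V0 (stackStrategy B (FirstCycleGood B g)) ρ)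
    (n : ℕ) : ∑ i ∈ range n, g (ρ i) ≤ 2 * ∑ s, |g s| := by
  have hgood := stackStrategy_forces (P := FirstCycleWins B g)
    (fun p s h hs => by simpa [FirstCycleGood, hs] using h)
    (fun s l hnd hw => (firstCycleWins_cons_iff B g hnd.length_le_card).1 hw) hwin hρ hc
  have hloops : ∑ i ∈ range n, loopWeight g (loopStack (prefixList ρ i)) (ρ (i + 1)) ≤ 0 :=
    sum_nonpos fun i _ => loopWeight_nonpos_of_firstCycleGood B (hgood i)
  have hstack := abs_le.1 (abs_sum_map_le_of_nodup g (nodup_loopStack (prefixList ρ n)))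
  have hlast := abs_le.1 (abs_le_sum_abs g (ρ n))
  linarith [sum_range_add_eq_sum_loopStack_add_sum_loopWeight ρ g n]

/-- Player 1 closes only loops of weight at least `1`, and closes one at least every `card S`
moves. -/
lemma exists_play_of_not_firstCycleWins (hlose : ¬ FirstCycleWins B g [B.vI])
    {σ : List S → S} (hσ : B.IsStrategy B.V0 σ) :
    ∃ ρ, B.Play ρ ∧ B.ConsistentWith B.V0 σ ρ ∧
      ∀ n : ℕ, (n : ℤ) + 1 ≤
        Fintype.card S * (∑ i ∈ range n, g (ρ i) + 2 * ∑ s, |g s| + 1) := by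
  obtain ⟨ρ, hρ, hcσ, hcτ⟩ := B.exists_play_consistentWith hσ
    (isStrategy_stackStrategy B B.V0ᶜ fun p s => ¬ FirstCycleGood B g p s)
  refine ⟨ρ, hρ, hcσ, fun n => ?_⟩
  have hbad := stackStrategy_forces (pl := B.V0ᶜ) (P := fun p => ¬ FirstCycleWins B g p)
    (fun p s h hs => by simpa [FirstCycleGood, hs] using h)
    (fun s l hnd hw => by
      rw [firstCycleWins_cons_iff B g hnd.length_le_card] at hw
      by_cases hs : s ∈ B.V0 <;> simp_all) hlose hρ hcτ
  have hcount := add_one_le_length_loopStack_add_card_mul_sum ρ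
    (fun i => (loopWeight_nonneg_of_not_firstCycleGood B (hbad i)).1)
    (fun i => (loopWeight_nonneg_of_not_firstCycleGood B (hbad i)).2) n
  have hlen : ((loopStack (prefixList ρ n)).length : ℤ) ≤ Fintype.card S := by
    exact_mod_cast length_loopStack_le _
  have hstack := abs_le.1 (abs_sum_map_le_of_nodup g (nodup_loopStack (prefixList ρ n)))
  have hlast := abs_le.1 (abs_le_sum_abs g (ρ n))
  have hloops : ∑ i ∈ range n, loopWeight g (loopStack (prefixList ρ i)) (ρ (i + 1)) ≤
      ∑ i ∈ range n, g (ρ i) + 2 * ∑ s, |g s| := by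
    linarith [sum_range_add_eq_sum_loopStack_add_sum_loopWeight ρ g n]
  nlinarith [mul_le_mul_of_nonneg_left hloops (Int.natCast_nonneg (Fintype.card S))]

end FirstCycleOutcomes

section SumValue

variable {S : Type} (B : Arena S) (g : S → ℤ)

def PrefixSumsLE (c : ℤ) : Set (ℕ → S) := {ρ | ∀ n, ∑ i ∈ range n, g (ρ i) ≤ c}

def SumBoundedFrom (s : S) : Prop :=
  ∃ c : ℕ, (B.withInit s).Player0Wins (PrefixSumsLE g c)

/-- Junk value `0` unless `SumBoundedFrom B g s`. -/
noncomputable def sumValue (s : S) : ℕ :=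
  sInf {c : ℕ | (B.withInit s).Player0Wins (PrefixSumsLE g c)}

variable {B g}

lemma nonneg_of_winningStrategy_prefixSumsLE {s : S} {c : ℤ} {σ : List S → S}
    (hσ : (B.withInit s).WinningStrategy B.V0 (PrefixSumsLE g c) σ) : 0 ≤ c := by
  obtain ⟨ρ, -, hρ⟩ := hσ.exists_play_mem
  simpa using hρ 0

lemma winningStrategy_prefixSumsLE_tail {s s' : S} {c : ℤ} {σ : List S → S}
    (hσ : (B.withInit s).WinningStrategy B.V0 (PrefixSumsLE g c) σ) (he : B.E s s')
    (hmove : s ∈ B.V0 → σ [s] = s') :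
    (B.withInit s').WinningStrategy B.V0 (PrefixSumsLE g (c - g s)) (fun h => σ (s :: h)) := by
  refine ⟨fun h v hv => hσ.1 (s :: h) v hv, fun ρ' hρ' hc' n => ?_⟩
  let ρ : ℕ → S := fun k => Nat.casesOn k s ρ'
  have hplay : (B.withInit s).Play ρ := by
    refine ⟨rfl, fun k => ?_⟩
    cases k with
    | zero => show B.E s (ρ' 0); rw [hρ'.1]; exact he
    | succ k => exact hρ'.2 k
  have hcons : (B.withInit s).ConsistentWith B.V0 σ ρ := by
    intro k hk
    cases k with
    | zero => exact hρ'.1.trans (hmove hk).symm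
    | succ k => rw [prefixList_succ_eq_cons]; exact hc' k hk
  have hsum := hσ.2 ρ hplay hcons (n + 1)
  rw [sum_range_succ'] at hsum
  change ∑ i ∈ range n, g (ρ' i) + g s ≤ c at hsum
  linarith

lemma sumBoundedFrom_and_sumValue_add_le {s s' : S} {σ : List S → S}
    (hσ : (B.withInit s).WinningStrategy B.V0 (PrefixSumsLE g (sumValue B g s)) σ)
    (he : B.E s s') (hmove : s ∈ B.V0 → σ [s] = s') :
    SumBoundedFrom B g s' ∧ (sumValue B g s' : ℤ) + g s ≤ sumValue B g s := by
  have htail := winningStrategy_prefixSumsLE_tail hσ he hmove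
  obtain ⟨c, hc⟩ : ∃ c : ℕ, (c : ℤ) = sumValue B g s - g s :=
    ⟨_, Int.toNat_of_nonneg (nonneg_of_winningStrategy_prefixSumsLE htail)⟩
  rw [← hc] at htail
  have hle : sumValue B g s' ≤ c := Nat.sInf_le ⟨_, htail⟩
  exact ⟨⟨c, _, htail⟩, by omega⟩

lemma exists_sumValue_succ_le {s : S} (hs : SumBoundedFrom B g s) (hV0 : s ∈ B.V0) :
    ∃ s', B.E s s' ∧ SumBoundedFrom B g s' ∧
      (sumValue B g s' : ℤ) + g s ≤ sumValue B g s := by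
  obtain ⟨σ, hσ⟩ : (B.withInit s).Player0Wins (PrefixSumsLE g (sumValue B g s)) :=
    Nat.sInf_mem hs
  have he : B.E s (σ [s]) := hσ.1 [] s hV0
  exact ⟨σ [s], he, sumBoundedFrom_and_sumValue_add_le hσ he fun _ => rfl⟩

lemma sumValue_succ_le {s s' : S} (hs : SumBoundedFrom B g s) (hV1 : s ∉ B.V0)
    (he : B.E s s') :
    SumBoundedFrom B g s' ∧ (sumValue B g s' : ℤ) + g s ≤ sumValue B g s := by
  obtain ⟨σ, hσ⟩ : (B.withInit s).Player0Wins (PrefixSumsLE g (sumValue B g s)) :=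
    Nat.sInf_mem hs
  exact sumBoundedFrom_and_sumValue_add_le hσ he fun h => absurd h hV1

variable (B g)

open Classical in
noncomputable def sumValueMove (s : S) : S :=
  if h : ∃ s', B.E s s' ∧ SumBoundedFrom B g s' ∧
      (sumValue B g s' : ℤ) + g s ≤ sumValue B g s then h.choose
  else B.defaultSucc s

theorem exists_positional_prefixSumsLE (hinit : SumBoundedFrom B g B.vI) :
    ∃ σ, Positional σ ∧ B.WinningStrategy B.V0 (PrefixSumsLE g (sumValue B g B.vI)) σ := by
  refine ⟨fun h => sumValueMove B g (h.getLastD B.vI), fun h v => by simp, fun h v hv => ?_,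
    fun ρ hρ hc => ?_⟩
  · dsimp only
    rw [List.getLastD_concat, sumValueMove]
    split_ifs with hx
    exacts [hx.choose_spec.1, B.edge_defaultSucc v]
  have hinv : ∀ n, SumBoundedFrom B g (ρ n) ∧
      ∑ i ∈ range n, g (ρ i) + sumValue B g (ρ n) ≤ sumValue B g B.vI := by
    intro n
    induction n with
    | zero => simpa [hρ.1] using hinit
    | succ n ih =>
      rw [sum_range_succ]
      by_cases hn : ρ n ∈ B.V0
      · have hx := exists_sumValue_succ_le ih.1 hn
        have hmove : ρ (n + 1) = hx.choose := by
          rw [hc n hn]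
          dsimp only
          rw [getLastD_prefixList, sumValueMove, dif_pos hx]
        rw [hmove]
        exact ⟨hx.choose_spec.2.1, by linarith [hx.choose_spec.2.2, ih.2]⟩
      · have hnext := sumValue_succ_le ih.1 hn (hρ.2 n)
        exact ⟨hnext.1, by linarith [hnext.2, ih.2]⟩
  intro n
  linarith [hinv n, Int.natCast_nonneg (sumValue B g (ρ n))]

variable {B g} in
lemma sumBoundedFrom_of_firstCycleWins [DecidableEq S] [Fintype S]
    (hwin : FirstCycleWins B g [B.vI]) : SumBoundedFrom B g B.vI :=
  ⟨(2 * ∑ s, |g s|).toNat, _, isStrategy_stackStrategy B B.V0 _, fun _ hρ hc n =>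
    (sum_range_le_of_firstCycleWins hwin hρ hc n).trans (Int.self_le_toNat _)⟩

end SumValue

section MeanPayoff

open Topology

lemma limsup_div_le_of_le {u : ℕ → ℝ} {t C : ℝ} (h : ∀ n : ℕ, u n ≤ n * t + C) :
    limsup (fun n : ℕ => ((u n : ℝ) / (n : ℝ) : EReal)) atTop ≤ t := by
  simp_rw [← EReal.coe_div]
  have hlim : Tendsto (fun n : ℕ => ((t + C / n : ℝ) : EReal)) atTop (𝓝 (t : EReal)) :=
    EReal.tendsto_coe.2 <| by
      simpa using tendsto_const_nhds.add (tendsto_const_div_atTop_nhds_zero_nat C)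
  refine (limsup_le_limsup ?_).trans hlim.limsup_eq.le
  filter_upwards [eventually_gt_atTop 0] with n hn
  have hn : (0 : ℝ) < n := by exact_mod_cast hn
  rw [EReal.coe_le_coe_iff, div_le_iff₀ hn, add_mul, div_mul_cancel₀ _ hn.ne']
  linarith [h n]

lemma le_limsup_div_of_le {u : ℕ → ℝ} {a C : ℝ} (h : ∀ n : ℕ, n * a - C ≤ u n) :
    (a : EReal) ≤ limsup (fun n : ℕ => ((u n : ℝ) / (n : ℝ) : EReal)) atTop := by
  simp_rw [← EReal.coe_div]
  have hlim : Tendsto (fun n : ℕ => ((a - C / n : ℝ) : EReal)) atTop (𝓝 (a : EReal)) :=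
    EReal.tendsto_coe.2 <| by
      simpa using tendsto_const_nhds.sub (tendsto_const_div_atTop_nhds_zero_nat C)
  refine hlim.limsup_eq.ge.trans (limsup_le_limsup ?_)
  filter_upwards [eventually_gt_atTop 0] with n hn
  have hn : (0 : ℝ) < n := by exact_mod_cast hn
  rw [EReal.coe_le_coe_iff, le_div_iff₀ hn, sub_mul, div_mul_cancel₀ _ hn.ne']
  linarith [h n]

variable {S : Type} {B : Arena S} {f : S → ℤ} {t : ℤ}

lemma cast_EL_eq_sum_sub_add (f : S → ℤ) (t : ℤ) (ρ : ℕ → S) (n : ℕ) :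
    (EL (fun s _ => f s) ρ n : ℝ) =
      ((∑ i ∈ range n, (f (ρ i) - t) : ℤ) : ℝ) + n * t := by
  simp [EL, sum_sub_distrib]

lemma Arena.WinningStrategy.MP_of_prefixSumsLE {c : ℤ} {σ : List S → S}
    (hσ : B.WinningStrategy B.V0 (PrefixSumsLE (fun s => f s - t) c) σ) :
    B.WinningStrategy B.V0 (MP (fun s _ => f s) t) σ := by
  refine ⟨hσ.1, fun ρ hρ hc => limsup_div_le_of_le (C := c) fun n => ?_⟩
  have hle : ((∑ i ∈ range n, (f (ρ i) - t) : ℤ) : ℝ) ≤ c := by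
    exact_mod_cast hσ.2 ρ hρ hc n
  rw [cast_EL_eq_sum_sub_add f t]
  linarith

variable [DecidableEq S] [Fintype S]

lemma not_player0Wins_MP_of_not_firstCycleWins
    (hlose : ¬ FirstCycleWins B (fun s => f s - t) [B.vI]) :
    ¬ B.Player0Wins (MP (fun s _ => f s) t) := by
  rintro ⟨σ, hσ⟩
  obtain ⟨ρ, hρ, hc, hlow⟩ := exists_play_of_not_firstCycleWins hlose hσ.1
  have hN : (0 : ℝ) < Fintype.card S := by exact_mod_cast Fintype.card_pos_iff.2 ⟨B.vI⟩
  have hge : (((t : ℝ) + 1 / Fintype.card S : ℝ) : EReal) ≤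
      limsup (fun n : ℕ => ((EL (fun s _ => f s) ρ n : ℝ) / (n : ℝ) : EReal)) atTop := by
    refine le_limsup_div_of_le (C := 2 * ∑ s, |f s - t| + 1) fun n => ?_
    have hn : (n : ℝ) + 1 ≤ Fintype.card S *
        (((∑ i ∈ range n, (f (ρ i) - t) : ℤ) : ℝ) + 2 * ∑ s, |f s - t| + 1) := by
      exact_mod_cast hlow n
    have hdiv : (n : ℝ) / Fintype.card S ≤
        ((∑ i ∈ range n, (f (ρ i) - t) : ℤ) : ℝ) + 2 * ∑ s, |f s - t| + 1 := by
      rw [div_le_iff₀' hN]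
      linarith
    rw [cast_EL_eq_sum_sub_add f t, mul_add, mul_one_div]
    linarith
  have hlt : ((t : ℝ) : EReal) < (((t : ℝ) + 1 / Fintype.card S : ℝ) : EReal) :=
    EReal.coe_lt_coe_iff.2 (by simp [hN])
  exact absurd (hσ.2 ρ hρ hc) (not_le.2 (hlt.trans_le hge))

end MeanPayoff

theorem Arena.exists_positional_winningStrategy_MP {S : Type} [Finite S] (B : Arena S)
    (f : S → ℤ) (t : ℤ) (h : B.Player0Wins (MP (fun s _ => f s) t)) :
    ∃ σ, Positional σ ∧ B.WinningStrategy B.V0 (MP (fun s _ => f s) t) σ := by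
  classical
  have := Fintype.ofFinite S
  by_cases hwin : FirstCycleWins B (fun s => f s - t) [B.vI]
  · obtain ⟨σ, hpos, hσ⟩ :=
      exists_positional_prefixSumsLE B _ (sumBoundedFrom_of_firstCycleWins hwin)
    exact ⟨σ, hpos, hσ.MP_of_prefixSumsLE⟩
  · exact absurd h (not_player0Wins_MP_of_not_firstCycleWins hwin)

section Reduction

variable {V M : Type}

lemma Mem.runAux_append_singleton (mem : Mem V M) (m : M) {l : List V} (hl : l ≠ [])
    (d b : V) :
    mem.runAux m (l ++ [b]) = mem.upd (mem.runAux m l) (l.getLastD d) b := by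
  induction l generalizing m with
  | nil => exact absurd rfl hl
  | cons a l ih =>
    cases l with
    | nil => rfl
    | cons c l => exact ih (mem.upd m a c) (List.cons_ne_nil c l)

lemma Mem.run_prefixList (mem : Mem V M) (ρ : ℕ → V) (n : ℕ) :
    mem.run (prefixList ρ n) = mem.track ρ n := by
  induction n with
  | zero => rfl
  | succ n ih =>
    obtain ⟨h, hh⟩ := exists_prefixList_eq_append ρ n
    rw [Mem.run, prefixList_succ, mem.runAux_append_singleton _ (by simp [hh]) (ρ n),
      getLastD_prefixList, ← Mem.run, ih, Mem.track]

variable {A : Arena V} {mem : Mem V M}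

lemma Arena.Play.extendPlay {ρ : ℕ → V} (hρ : A.Play ρ) :
    (A.expand mem).Play (extendPlay mem ρ) :=
  ⟨by simp [_root_.extendPlay, hρ.1, Mem.track, Arena.expand], fun n => ⟨hρ.2 n, rfl⟩⟩

lemma Arena.Play.eq_extendPlay {π : ℕ → V × M} (hπ : (A.expand mem).Play π) :
    A.Play (Prod.fst ∘ π) ∧ π = _root_.extendPlay mem (Prod.fst ∘ π) := by
  refine ⟨⟨congrArg Prod.fst hπ.1, fun n => (hπ.2 n).1⟩, funext fun n => ?_⟩
  induction n with
  | zero => show π 0 = ((π 0).1, mem.mI); rw [hπ.1]; rfl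
  | succ n ih =>
    refine Prod.ext rfl ((hπ.2 n).2.trans ?_)
    rw [ih]
    rfl

variable (A mem) in
def Arena.liftStrategy (σ : List V → V) (h : List (V × M)) : V × M :=
  let x := h.getLastD (A.expand mem).vI
  (σ (h.map Prod.fst), mem.upd x.2 x.1 (σ (h.map Prod.fst)))

variable {Win : Set (ℕ → V)} {Win' : Set (ℕ → V × M)}

lemma Reduces.player0Wins_expand (hred : Reduces A mem Win Win') (h : A.Player0Wins Win) :
    (A.expand mem).Player0Wins Win' := by
  obtain ⟨σ, hσ, hwin⟩ := h
  refine ⟨A.liftStrategy mem σ, fun h v hv => ?_, fun π hπ hc => ?_⟩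
  · simp only [Arena.liftStrategy, List.getLastD_concat, List.map_append, List.map_cons,
      List.map_nil]
    exact ⟨hσ _ v.1 hv, rfl⟩
  · obtain ⟨hρ, hπρ⟩ := hπ.eq_extendPlay
    have hcρ : A.ConsistentWith A.V0 σ (Prod.fst ∘ π) := by
      intro n hn
      rw [Function.comp_apply, hc n hn, Arena.liftStrategy, map_prefixList]
    rw [hπρ]
    exact (hred _ hρ).1 (hwin _ hρ hcρ)

lemma Reduces.exists_finiteStateOfSize [Fintype M] (hred : Reduces A mem Win Win')
    {σ' : List (V × M) → V × M} (hpos : Positional σ')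
    (hσ' : (A.expand mem).WinningStrategy (A.expand mem).V0 Win' σ') :
    ∃ σ, A.WinningStrategy A.V0 Win σ ∧ A.FiniteStateOfSize (Fintype.card M) σ := by
  let nxt : V → M → V := fun v m => (σ' [(v, m)]).1
  let σ : List V → V := fun h => nxt (h.getLastD A.vI) (mem.run h)
  have hmove : ∀ x : V × M, x.1 ∈ A.V0 → (A.expand mem).E x (σ' [x]) :=
    fun x hx => by simpa using hσ'.1 [] x hx
  refine ⟨σ, ⟨fun h v hv => ?_, fun ρ hρ hc => ?_⟩,
    ⟨M, inferInstance, mem, rfl, nxt, fun h v => by simp [σ]⟩⟩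
  · simpa [σ, nxt] using (hmove (v, mem.run (h ++ [v])) hv).1
  · refine (hred ρ hρ).2 (hσ'.2 _ hρ.extendPlay fun n hn => ?_)
    have hstep := hmove (extendPlay mem ρ n) hn
    have hρn : ρ (n + 1) = (σ' [extendPlay mem ρ n]).1 := by
      rw [hc n hn]
      show (σ' [((prefixList ρ n).getLastD A.vI, mem.run (prefixList ρ n))]).1 = _
      rw [getLastD_prefixList, Mem.run_prefixList]
      rfl
    obtain ⟨h, hh⟩ := exists_prefixList_eq_append (extendPlay mem ρ) n
    rw [hh, hpos]
    exact Prod.ext hρn (by rw [hstep.2, ← hρn]; rfl)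

end Reduction

section RechargeMemory

open Topology

lemma limsup_avg_eq_of_eventually_eq {u : ℕ → ℝ} {c : ℝ} (h : ∀ᶠ n in atTop, u n = c) :
    limsup (fun n : ℕ => (((∑ i ∈ range n, u i) / n : ℝ) : EReal)) atTop = c := by
  have hu : Tendsto u atTop (𝓝 c) := tendsto_const_nhds.congr' (h.mono fun _ hn => hn.symm)
  simp_rw [div_eq_inv_mul]
  exact (EReal.tendsto_coe.2 hu.cesaro).limsup_eq

variable {V : Type} (cap : ℕ)

def rechargeStep (x : ℤ) : Option ℤ → ℤ
  | none => cap
  | some k => x + k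

lemma ELcap_succ (w : V → V → Option ℤ) (ρ : ℕ → V) (n : ℕ) :
    ELcap w cap ρ (n + 1) = rechargeStep cap (ELcap w cap ρ n) (w (ρ n) (ρ (n + 1))) := by
  rw [ELcap]
  cases w (ρ n) (ρ (n + 1)) <;> rfl

lemma ELcap_le_cap {A : Arena V} {w : V → V → Option ℤ} (hw : RechargeWeights A w)
    {ρ : ℕ → V} (hρ : A.Play ρ) (n : ℕ) : ELcap w cap ρ n ≤ cap := by
  induction n with
  | zero => exact le_rfl
  | succ n ih =>
    rw [ELcap_succ]
    cases hk : w (ρ n) (ρ (n + 1)) with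
    | none => exact le_rfl
    | some k =>
      show ELcap w cap ρ n + k ≤ cap
      linarith [hw _ _ (hρ.2 n) k hk]

def toLevel (x : ℤ) : Option (Fin (cap + 1)) :=
  if h : 0 ≤ x ∧ x ≤ cap then some ⟨x.toNat, by omega⟩ else none

lemma exists_toLevel_eq_some {x : ℤ} (h0 : 0 ≤ x) (h1 : x ≤ cap) :
    ∃ e : Fin (cap + 1), toLevel cap x = some e ∧ ((e : ℕ) : ℤ) = x :=
  ⟨⟨x.toNat, by omega⟩, dif_pos ⟨h0, h1⟩, Int.toNat_of_nonneg h0⟩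

def rechargeMemory (w : V → V → Option ℤ) : Mem V (Option (Fin (cap + 1))) where
  mI := toLevel cap cap
  upd m u v := m.bind fun e => toLevel cap (rechargeStep cap (e : ℕ) (w u v))

def levelWeight (t : ℤ) (x : V × Option (Fin (cap + 1))) : ℤ :=
  x.2.elim (t + 1) fun e => (e : ℕ)

variable {A : Arena V} {w : V → V → Option ℤ}

lemma track_rechargeMemory (hw : RechargeWeights A w) {ρ : ℕ → V} (hρ : A.Play ρ) (n : ℕ) :
    (rechargeMemory cap w).track ρ n =
      if ∀ i ≤ n, 0 ≤ ELcap w cap ρ i then toLevel cap (ELcap w cap ρ n) else none := by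
  induction n with
  | zero => simp [Mem.track, rechargeMemory, ELcap]
  | succ n ih =>
    have hall : (∀ i ≤ n + 1, 0 ≤ ELcap w cap ρ i) ↔
        (∀ i ≤ n, 0 ≤ ELcap w cap ρ i) ∧ 0 ≤ ELcap w cap ρ (n + 1) := by
      simp only [Nat.le_succ_iff, or_imp, forall_and, forall_eq]
    rw [Mem.track, ih]
    by_cases hn : ∀ i ≤ n, 0 ≤ ELcap w cap ρ i
    · obtain ⟨e, he, hex⟩ :=
        exists_toLevel_eq_some cap (hn n le_rfl) (ELcap_le_cap cap hw hρ n)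
      rw [if_pos hn, he]
      change toLevel cap (rechargeStep cap (e : ℕ) (w (ρ n) (ρ (n + 1)))) = _
      rw [hex, ← ELcap_succ]
      by_cases hn' : 0 ≤ ELcap w cap ρ (n + 1)
      · rw [if_pos (hall.2 ⟨hn, hn'⟩)]
      · rw [if_neg fun h => hn' (hall.1 h).2, toLevel, dif_neg fun h => hn' h.1]
    · rw [if_neg hn, if_neg fun h => hn (hall.1 h).1]
      rfl

lemma levelWeight_extendPlay (t : ℤ) (hw : RechargeWeights A w) {ρ : ℕ → V} (hρ : A.Play ρ)
    (n : ℕ) : levelWeight cap t (extendPlay (rechargeMemory cap w) ρ n) =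
      if ∀ i ≤ n, 0 ≤ ELcap w cap ρ i then ELcap w cap ρ n else t + 1 := by
  rw [extendPlay, levelWeight, track_rechargeMemory cap hw hρ]
  split_ifs with hn
  · obtain ⟨e, he, hex⟩ := exists_toLevel_eq_some cap (hn n le_rfl) (ELcap_le_cap cap hw hρ n)
    rw [he]
    exact hex
  · rfl

/-- Once the energy is exhausted the weight is `t + 1` forever, so the average tends to `t + 1`. -/
theorem reduces_avgRecharge_MP (hw : RechargeWeights A w) (t : ℤ) :
    Reduces A (rechargeMemory cap w) (AvgRecharge w cap t)
      (MP (fun x _ => levelWeight cap t x) t) := by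
  intro ρ hρ
  set π := extendPlay (rechargeMemory cap w) ρ
  have hweight : ∀ n, levelWeight cap t (π n) = _ := levelWeight_extendPlay cap t hw hρ
  have hEL : ∀ n, (EL (fun x _ => levelWeight cap t x) π n : ℝ) =
      ∑ i ∈ range n, (levelWeight cap t (π i) : ℝ) := by
    simp [EL]
  simp only [AvgRecharge, MP, Set.mem_inter_iff, Set.mem_ofPred_eq, hEL, ← EReal.coe_div]
  by_cases hR : ρ ∈ Recharge w cap
  · have hlevel : ∀ n, levelWeight cap t (π n) = ELcap w cap ρ n :=
      fun n => by rw [hweight, if_pos fun i _ => hR i]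
    simp [avgELcap, hlevel, hR]
  · obtain ⟨n₀, hn₀⟩ : ∃ n₀, ¬ 0 ≤ ELcap w cap ρ n₀ := by
      simpa [Recharge] using hR
    have hlim := limsup_avg_eq_of_eventually_eq
      (u := fun i => (levelWeight cap t (π i) : ℝ)) (c := t + 1) <| by
        filter_upwards [eventually_ge_atTop n₀] with n hn
        rw [hweight, if_neg fun h => hn₀ (h n₀ hn)]
        push_cast
        rfl
    simp only [hR, and_false, false_iff, hlim, EReal.coe_le_coe_iff]
    linarith

end RechargeMemory

/-- If Player 0 wins the average-bounded recharge game, then she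
wins it with a finite-state strategy of size `cap + 2`. -/
theorem avgRecharge_finiteState_strategy {V : Type} [Fintype V] (A : Arena V)
    (w : V → V → Option ℤ) (hw : RechargeWeights A w) (cap t : ℕ)
    (h : A.Player0Wins (AvgRecharge w cap (t : ℝ))) :
    ∃ σ : List V → V, A.WinningStrategy A.V0 (AvgRecharge w cap (t : ℝ)) σ ∧
      A.FiniteStateOfSize (cap + 2) σ := by
  have hred := reduces_avgRecharge_MP cap hw t
  rw [← Int.cast_natCast] at h
  obtain ⟨σ', hpos, hσ'⟩ :=
    (A.expand _).exists_positional_winningStrategy_MP _ _ (hred.player0Wins_expand h)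
  obtain ⟨σ, hσ, hsize⟩ := hred.exists_finiteStateOfSize hpos hσ'
  rw [Int.cast_natCast] at hσ
  exact ⟨σ, hσ, by simpa using hsize⟩
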